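/- If P = QXRY where P, Q, R are palindromes and X, Y are words, then one of the following six cases holds for some palindromes S, T, U and possibly a word Z: (1) X = S·reverse(Y)·TU; (2) X = ZST and Y = reverse(Z)·U; (3) X = SZT and Y = U·reverse(Z); (4) X = ZS and Y = T·reverse(Z)·U; (5) X = SZ and Y = TU·reverse(Z); (6) Y = ST·reverse(X)·U. -/
import Mathlib


def Pal {α : Type*} (w : List α) : Prop := w.reverse = w

noncomputable def palLen {α : Type*} (w : List α) : ℕ :=
  sInf {k | ∃ l : List (List α), l.length = k ∧ (∀ p ∈ l, Pal p) ∧ l.flatten = w}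

section Stmt10Aux

variable {α : Type*}

private lemma pal_nil' : Pal ([] : List α) := List.reverse_nil

/-- L1: if a palindrome has a palindromic suffix, the complementary prefix is a
product of two palindromes. -/
private lemma palL1 : ∀ n (P B Q : List α), P.length ≤ n → Pal P → Pal Q → P = B ++ Q →
    ∃ u v, Pal u ∧ Pal v ∧ B = u ++ v := by
  intro n
  induction n with
  | zero =>
    intro P B Q hn hP hQ hPBQ
    have hP0 : P = [] := List.length_eq_zero_iff.mp (Nat.le_zero.mp hn)
    have h0 : B ++ Q = [] := hPBQ.symm.trans hP0
    obtain ⟨hB, -⟩ := List.append_eq_nil_iff.mp h0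
    exact ⟨[], [], pal_nil', pal_nil', by simp [hB]⟩
  | succ n ih =>
    intro P B Q hn hP hQ hPBQ
    have hP' : P.reverse = P := hP
    have hQ' : Q.reverse = Q := hQ
    have hswap : B ++ Q = Q ++ B.reverse := by
      calc B ++ Q = P := hPBQ.symm
        _ = P.reverse := hP'.symm
        _ = Q.reverse ++ B.reverse := by rw [hPBQ]; simp
        _ = Q ++ B.reverse := by rw [hQ']
    rcases List.append_eq_append_iff.mp hswap with ⟨D, hD1, hD2⟩ | ⟨c, hc1, hc2⟩
    · -- hD1 : Q = B ++ D, hD2 : Q = D ++ B.reverse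
      have hDpal : Pal D := by
        have h1 : D.reverse ++ B.reverse = D ++ B.reverse := by
          calc D.reverse ++ B.reverse = (B ++ D).reverse := by simp
            _ = Q.reverse := by rw [hD1]
            _ = Q := hQ'
            _ = D ++ B.reverse := hD2
        exact List.append_cancel_right h1
      rcases eq_or_ne B [] with hB | hB
      · exact ⟨[], [], pal_nil', pal_nil', by simp [hB]⟩
      · refine ih Q B D ?_ hQ hDpal hD1
        have h1 : P.length = B.length + Q.length := by rw [hPBQ]; simp
        have h2 : 0 < B.length := List.length_pos_iff.mpr hB
        omega
    · -- hc1 : B = Q ++ c, hc2 : B.reverse = c ++ Q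
      have hcpal : Pal c := by
        have h1 : c.reverse ++ Q = c ++ Q := by
          calc c.reverse ++ Q = c.reverse ++ Q.reverse := by rw [hQ']
            _ = (Q ++ c).reverse := by simp
            _ = B.reverse := by rw [hc1]
            _ = c ++ Q := hc2
        exact List.append_cancel_right h1
      exact ⟨Q, c, hQ, hcpal, hc1⟩

/-- The six-case conclusion of the main theorem. -/
private abbrev SixCases (X Y : List α) : Prop :=
  (∃ S T U : List α, Pal S ∧ Pal T ∧ Pal U ∧ X = S ++ Y.reverse ++ T ++ U) ∨
  (∃ S T U Z : List α, Pal S ∧ Pal T ∧ Pal U ∧ X = Z ++ S ++ T ∧ Y = Z.reverse ++ U) ∨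
  (∃ S T U Z : List α, Pal S ∧ Pal T ∧ Pal U ∧ X = S ++ Z ++ T ∧ Y = U ++ Z.reverse) ∨
  (∃ S T U Z : List α, Pal S ∧ Pal T ∧ Pal U ∧ X = Z ++ S ∧ Y = T ++ Z.reverse ++ U) ∨
  (∃ S T U Z : List α, Pal S ∧ Pal T ∧ Pal U ∧ X = S ++ Z ∧ Y = T ++ U ++ Z.reverse) ∨
  (∃ S T U : List α, Pal S ∧ Pal T ∧ Pal U ∧ Y = S ++ T ++ X.reverse ++ U)

/-- Intermediate conclusion for overlap lemmas. -/
private abbrev COut (X₁ Y : List α) : Prop :=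
  (∃ H T, Pal H ∧ Pal T ∧ X₁ = H ++ Y.reverse ++ T) ∨
  (∃ Z S U, Pal S ∧ Pal U ∧ X₁ = Z ++ S ∧ Y = Z.reverse ++ U) ∨
  (∃ Z S U, Pal S ∧ Pal U ∧ X₁ = S ++ Z ∧ Y = U ++ Z.reverse) ∨
  (∃ T U, Pal T ∧ Pal U ∧ Y = T ++ X₁.reverse ++ U)

private lemma lemE (X₁ F₂ G Y : List α) (hG : Pal G) (hFpal : Pal (X₁.reverse ++ F₂))
    (hY : Y = G ++ F₂.reverse) : COut X₁ Y := by
  have h0 : F₂.reverse ++ X₁ = X₁.reverse ++ F₂ := by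
    calc F₂.reverse ++ X₁ = (X₁.reverse ++ F₂).reverse := by simp
      _ = X₁.reverse ++ F₂ := hFpal
  rcases List.append_eq_append_iff.mp h0 with ⟨K, hK1, hK2⟩ | ⟨K₂, hK21, hK22⟩
  · -- hK1 : X₁.reverse = F₂.reverse ++ K, hK2 : X₁ = K ++ F₂
    have hKpal : Pal K := by
      have h1 : F₂.reverse ++ K.reverse = F₂.reverse ++ K := by
        calc F₂.reverse ++ K.reverse = (K ++ F₂).reverse := by simp
          _ = X₁.reverse := by rw [← hK2]
          _ = F₂.reverse ++ K := hK1
      exact List.append_cancel_left h1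
    exact Or.inr (Or.inr (Or.inl ⟨F₂, K, G, hKpal, hG, hK2, hY⟩))
  · -- hK21 : F₂.reverse = X₁.reverse ++ K₂, hK22 : F₂ = K₂ ++ X₁
    have hK2pal : Pal K₂ := by
      have h1 : X₁.reverse ++ K₂.reverse = X₁.reverse ++ K₂ := by
        calc X₁.reverse ++ K₂.reverse = (K₂ ++ X₁).reverse := by simp
          _ = F₂.reverse := by rw [← hK22]
          _ = X₁.reverse ++ K₂ := hK21
      exact List.append_cancel_left h1
    refine Or.inr (Or.inr (Or.inr ⟨G, K₂, hG, hK2pal, ?_⟩))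
    rw [hY, hK21]
    simp [List.append_assoc]

private lemma lemD : ∀ n (D X₁ Y : List α), D.length ≤ n → Pal D →
    (X₁.reverse ++ Y.reverse) ++ D = D ++ (Y ++ X₁) → COut X₁ Y := by
  intro n
  induction n using Nat.strong_induction_on with
  | _ n ih =>
  intro D X₁ Y hn hD h
  have hD' : D.reverse = D := hD
  rcases eq_or_ne (X₁.reverse ++ Y.reverse) [] with hA0 | hA0
  · obtain ⟨h1, h2⟩ := List.append_eq_nil_iff.mp hA0
    have hX : X₁ = [] := by simpa using congrArg List.reverse h1
    have hY : Y = [] := by simpa using congrArg List.reverse h2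
    exact Or.inr (Or.inl ⟨[], [], [], pal_nil', pal_nil', by simp [hX], by simp [hY]⟩)
  · rcases List.append_eq_append_iff.mp h with ⟨C, hC1, hC2⟩ | ⟨C₂, hC21, hC22⟩
    · -- hC1 : D = (X₁.reverse ++ Y.reverse) ++ C, hC2 : D = C ++ (Y ++ X₁)
      have hCpal : Pal C := by
        have h1 : C.reverse ++ (Y ++ X₁) = C ++ (Y ++ X₁) := by
          calc C.reverse ++ (Y ++ X₁) = ((X₁.reverse ++ Y.reverse) ++ C).reverse := by
                simp [List.append_assoc]
            _ = D.reverse := by rw [← hC1]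
            _ = D := hD'
            _ = C ++ (Y ++ X₁) := hC2
        exact List.append_cancel_right h1
      have hrec : (X₁.reverse ++ Y.reverse) ++ C = C ++ (Y ++ X₁) := hC1.symm.trans hC2
      have hlt : C.length < n := by
        have hlen : D.length = (X₁.reverse ++ Y.reverse).length + C.length := by
          rw [hC1]; simp; omega
        have hpos : 0 < (X₁.reverse ++ Y.reverse).length := List.length_pos_iff.mpr hA0
        omega
      exact ih C.length hlt C X₁ Y le_rfl hCpal hrec
    · -- hC21 : X₁.reverse ++ Y.reverse = D ++ C₂, hC22 : Y ++ X₁ = C₂ ++ D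
      have hC2pal : Pal C₂ := by
        have h1 : C₂.reverse ++ D = C₂ ++ D := by
          calc C₂.reverse ++ D = C₂.reverse ++ D.reverse := by rw [hD']
            _ = (D ++ C₂).reverse := by simp
            _ = (X₁.reverse ++ Y.reverse).reverse := by rw [← hC21]
            _ = Y ++ X₁ := by simp
            _ = C₂ ++ D := hC22
        exact List.append_cancel_right h1
      have hC2' : C₂.reverse = C₂ := hC2pal
      rcases List.append_eq_append_iff.mp hC21 with ⟨X₄, hX41, hX42⟩ | ⟨X₄, hX41, hX42⟩
      · -- hX41 : D = X₁.reverse ++ X₄, hX42 : Y.reverse = X₄ ++ C₂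
        have hYeq : Y = C₂ ++ X₄.reverse := by
          calc Y = Y.reverse.reverse := by simp
            _ = (X₄ ++ C₂).reverse := by rw [hX42]
            _ = C₂.reverse ++ X₄.reverse := by simp
            _ = C₂ ++ X₄.reverse := by rw [hC2']
        exact lemE X₁ X₄ C₂ Y hC2pal (hX41 ▸ hD) hYeq
      · -- hX41 : X₁.reverse = D ++ X₄, hX42 : C₂ = X₄ ++ Y.reverse
        have hX1eq : X₁ = X₄.reverse ++ D := by
          calc X₁ = X₁.reverse.reverse := by simp
            _ = (D ++ X₄).reverse := by rw [hX41]
            _ = X₄.reverse ++ D.reverse := by simp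
            _ = X₄.reverse ++ D := by rw [hD']
        have hsplit : X₄ ++ Y.reverse = Y ++ X₄.reverse := by
          calc X₄ ++ Y.reverse = C₂ := hX42.symm
            _ = C₂.reverse := hC2'.symm
            _ = (X₄ ++ Y.reverse).reverse := by rw [hX42]
            _ = Y ++ X₄.reverse := by simp
        rcases List.append_eq_append_iff.mp hsplit with ⟨X₅, hX51, hX52⟩ | ⟨X₅, hX51, hX52⟩
        · -- hX51 : Y = X₄ ++ X₅, hX52 : Y.reverse = X₅ ++ X₄.reverse
          have hX5pal : Pal X₅ := by
            have h1 : X₅.reverse ++ X₄.reverse = X₅ ++ X₄.reverse := by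
              calc X₅.reverse ++ X₄.reverse = (X₄ ++ X₅).reverse := by simp
                _ = Y.reverse := by rw [← hX51]
                _ = X₅ ++ X₄.reverse := hX52
            exact List.append_cancel_right h1
          exact Or.inr (Or.inl ⟨X₄.reverse, D, X₅, hD, hX5pal, hX1eq, by rw [hX51]; simp⟩)
        · -- hX51 : X₄ = Y ++ X₅, hX52 : X₄.reverse = X₅ ++ Y.reverse
          have hX5pal : Pal X₅ := by
            have h1 : X₅.reverse ++ Y.reverse = X₅ ++ Y.reverse := by
              calc X₅.reverse ++ Y.reverse = (Y ++ X₅).reverse := by simp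
                _ = X₄.reverse := by rw [← hX51]
                _ = X₅ ++ Y.reverse := hX52
            exact List.append_cancel_right h1
          refine Or.inl ⟨X₅, D, hX5pal, hD, ?_⟩
          rw [hX1eq, hX52]

private lemma lemC (F Y X₁ J : List α) (hF : Pal F) (hJ : Pal J)
    (h : F ++ Y = X₁.reverse ++ J) : COut X₁ Y := by
  have hF' : F.reverse = F := hF
  have hJ' : J.reverse = J := hJ
  rcases List.append_eq_append_iff.mp h with ⟨N, hN1, hN2⟩ | ⟨F₂, hF21, hF22⟩
  · -- hN1 : X₁.reverse = F ++ N, hN2 : Y = N ++ J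
    have hX1 : X₁ = N.reverse ++ F := by
      calc X₁ = X₁.reverse.reverse := by simp
        _ = (F ++ N).reverse := by rw [hN1]
        _ = N.reverse ++ F := by simp [hF']
    exact Or.inr (Or.inl ⟨N.reverse, F, J, hF, hJ, hX1, by rw [hN2]; simp⟩)
  · -- hF21 : F = X₁.reverse ++ F₂, hF22 : J = F₂ ++ Y
    have hJ2 : F₂ ++ Y = Y.reverse ++ F₂.reverse := by
      calc F₂ ++ Y = J := hF22.symm
        _ = J.reverse := hJ'.symm
        _ = (F₂ ++ Y).reverse := by rw [hF22]
        _ = Y.reverse ++ F₂.reverse := by simp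
    rcases List.append_eq_append_iff.mp hJ2 with ⟨G, hG1, hG2⟩ | ⟨F₃, hF31, hF32⟩
    · -- hG1 : Y.reverse = F₂ ++ G, hG2 : Y = G ++ F₂.reverse
      have hGpal : Pal G := by
        have h1 : G.reverse ++ F₂.reverse = G ++ F₂.reverse := by
          calc G.reverse ++ F₂.reverse = (F₂ ++ G).reverse := by simp
            _ = Y.reverse.reverse := by rw [← hG1]
            _ = Y := by simp
            _ = G ++ F₂.reverse := hG2
        exact List.append_cancel_right h1
      exact lemE X₁ F₂ G Y hGpal (by rw [← hF21]; exact hF) hG2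
    · -- hF31 : F₂ = Y.reverse ++ F₃, hF32 : F₂.reverse = F₃ ++ Y
      have hF3pal : Pal F₃ := by
        have h1 : F₃.reverse ++ Y = F₃ ++ Y := by
          calc F₃.reverse ++ Y = (Y.reverse ++ F₃).reverse := by simp
            _ = F₂.reverse := by rw [← hF31]
            _ = F₃ ++ Y := hF32
        exact List.append_cancel_right h1
      have hDrel : (X₁.reverse ++ Y.reverse) ++ F₃ = F₃ ++ (Y ++ X₁) := by
        calc (X₁.reverse ++ Y.reverse) ++ F₃ = X₁.reverse ++ (Y.reverse ++ F₃) := by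
              simp [List.append_assoc]
          _ = X₁.reverse ++ F₂ := by rw [← hF31]
          _ = F := hF21.symm
          _ = F.reverse := hF'.symm
          _ = (X₁.reverse ++ F₂).reverse := by rw [hF21]
          _ = F₂.reverse ++ X₁ := by simp
          _ = (F₃ ++ Y) ++ X₁ := by rw [hF32]
          _ = F₃ ++ (Y ++ X₁) := by simp [List.append_assoc]
      exact lemD F₃.length F₃ X₁ Y le_rfl hF3pal hDrel

private lemma lemB (nn : ℕ) (X Y : List α)
    (oracle : ∀ P' Q' R'' : List α, P'.length < nn → Pal P' → Pal Q' → Pal R'' →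
      P' = Q' ++ X ++ R'' ++ Y → SixCases X Y) :
    ∀ m (B R' : List α), R'.length ≤ m → Pal R' → Pal (Y.reverse ++ B) →
      (Y.reverse ++ B).length < nn →
      B ++ (X ++ R') = R' ++ (X.reverse ++ B.reverse) → SixCases X Y := by
  intro m
  induction m using Nat.strong_induction_on with
  | _ m ih =>
  intro B R' hm hR' hQpal hQlt hW
  have hR'' : R'.reverse = R' := hR'
  have hQeq : Y.reverse ++ B = B.reverse ++ Y := by
    calc Y.reverse ++ B = (Y.reverse ++ B).reverse := (hQpal : _ = _).symm
      _ = B.reverse ++ Y := by simp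
  rcases eq_or_ne B [] with hB0 | hB0
  · subst hB0
    simp only [List.reverse_nil, List.append_nil, List.nil_append] at hW hQeq
    -- hW : X ++ R' = R' ++ X.reverse ;  hQeq : Y.reverse = Y
    have hpal : Pal (X ++ R') := by
      show (X ++ R').reverse = X ++ R'
      rw [List.reverse_append, hR'']
      exact hW.symm
    obtain ⟨u, v, hu, hv, hX⟩ := palL1 (X ++ R').length (X ++ R') X R' le_rfl hpal hR' rfl
    exact Or.inr (Or.inl ⟨u, v, Y, [], hu, hv, hQeq, by simp [hX], by simp⟩)
  · rcases List.append_eq_append_iff.mp hW with ⟨M, hM1, hM2⟩ | ⟨C, hC1, hC2⟩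
    · -- hM1 : R' = B ++ M, hM2 : X ++ R' = M ++ (X.reverse ++ B.reverse)
      rcases List.append_eq_append_iff.mp hM2 with ⟨N, hN1, hN2⟩ | ⟨X₂, hX2a, hX2b⟩
      · -- hN1 : M = X ++ N, hN2 : R' = N ++ (X.reverse ++ B.reverse)
        have hR'e : R' = B ++ (X ++ N) := by rw [hM1, hN1]
        have hNpal : Pal N := by
          have h1 : N.reverse ++ (X.reverse ++ B.reverse) = N ++ (X.reverse ++ B.reverse) := by
            calc N.reverse ++ (X.reverse ++ B.reverse) = (B ++ (X ++ N)).reverse := by simp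
              _ = R'.reverse := by rw [← hR'e]
              _ = R' := hR''
              _ = N ++ (X.reverse ++ B.reverse) := hN2
          exact List.append_cancel_right h1
        have hWN : B ++ (X ++ N) = N ++ (X.reverse ++ B.reverse) := by
          rw [← hR'e]; exact hN2
        have hlt : N.length < m := by
          have h1 : R'.length = B.length + (X.length + N.length) := by rw [hR'e]; simp
          have h2 : 0 < B.length := List.length_pos_iff.mpr hB0
          omega
        exact ih N.length hlt B N le_rfl hNpal hQpal hQlt hWN
      · -- hX2a : X = M ++ X₂, hX2b : X.reverse ++ B.reverse = X₂ ++ R'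
        have hR'rev : R' = M.reverse ++ B.reverse := by
          calc R' = R'.reverse := hR''.symm
            _ = (B ++ M).reverse := by rw [hM1]
            _ = M.reverse ++ B.reverse := by simp
        have hX2pal : Pal X₂ := by
          have h1 : X₂.reverse ++ (M.reverse ++ B.reverse) = X₂ ++ (M.reverse ++ B.reverse) := by
            calc X₂.reverse ++ (M.reverse ++ B.reverse) = (M ++ X₂).reverse ++ B.reverse := by
                  simp [List.append_assoc]
              _ = X.reverse ++ B.reverse := by rw [← hX2a]
              _ = X₂ ++ R' := hX2b
              _ = X₂ ++ (M.reverse ++ B.reverse) := by rw [hR'rev]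
          exact List.append_cancel_right h1
        have hRsplit : B ++ M = M.reverse ++ B.reverse := by rw [← hM1]; exact hR'rev
        rcases List.append_eq_append_iff.mp hQeq with ⟨F, hF1, hF2⟩ | ⟨G, hG1, hG2⟩
        · -- hF1 : B.reverse = Y.reverse ++ F, hF2 : B = F ++ Y
          have hFpal : Pal F := by
            have h1 : F.reverse ++ Y = F ++ Y := by
              calc F.reverse ++ Y = (Y.reverse ++ F).reverse := by simp
                _ = B.reverse.reverse := by rw [← hF1]
                _ = B := by simp
                _ = F ++ Y := hF2
            exact List.append_cancel_right h1
          rcases List.append_eq_append_iff.mp hRsplit with ⟨H, hH1, hH2⟩ | ⟨J, hJ1, hJ2⟩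
          · -- hH1 : M.reverse = B ++ H, hH2 : M = H ++ B.reverse
            have hHpal : Pal H := by
              have h1 : H.reverse ++ B.reverse = H ++ B.reverse := by
                calc H.reverse ++ B.reverse = (B ++ H).reverse := by simp
                  _ = M.reverse.reverse := by rw [← hH1]
                  _ = M := by simp
                  _ = H ++ B.reverse := hH2
              exact List.append_cancel_right h1
            refine Or.inl ⟨H, F, X₂, hHpal, hFpal, hX2pal, ?_⟩
            rw [hX2a, hH2, hF1]
            simp [List.append_assoc]
          · -- hJ1 : B = M.reverse ++ J, hJ2 : B.reverse = J ++ M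
            have hJpal : Pal J := by
              have h1 : J.reverse ++ M = J ++ M := by
                calc J.reverse ++ M = (M.reverse ++ J).reverse := by simp
                  _ = B.reverse := by rw [← hJ1]
                  _ = J ++ M := hJ2
              exact List.append_cancel_right h1
            have hFY : F ++ Y = M.reverse ++ J := hF2.symm.trans hJ1
            rcases lemC F Y M J hFpal hJpal hFY with
              ⟨H, T, hH, hT, hMeq⟩ | ⟨Z, S, U, hS, hU, hMeq, hYeq⟩ |
              ⟨Z, S, U, hS, hU, hMeq, hYeq⟩ | ⟨T, U, hT, hU, hYeq⟩
            · refine Or.inl ⟨H, T, X₂, hH, hT, hX2pal, ?_⟩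
              rw [hX2a, hMeq]
            · exact Or.inr (Or.inl ⟨S, X₂, U, Z, hS, hX2pal, hU, by rw [hX2a, hMeq], hYeq⟩)
            · exact Or.inr (Or.inr (Or.inl ⟨S, X₂, U, Z, hS, hX2pal, hU, by rw [hX2a, hMeq],
                hYeq⟩))
            · exact Or.inr (Or.inr (Or.inr (Or.inl ⟨X₂, T, U, M, hX2pal, hT, hU, hX2a, hYeq⟩)))
        · -- hG1 : Y.reverse = B.reverse ++ G, hG2 : Y = G ++ B
          have hGpal : Pal G := by
            have h1 : G.reverse ++ B = G ++ B := by
              calc G.reverse ++ B = (B.reverse ++ G).reverse := by simp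
                _ = Y.reverse.reverse := by rw [← hG1]
                _ = Y := by simp
                _ = G ++ B := hG2
            exact List.append_cancel_right h1
          rcases List.append_eq_append_iff.mp hRsplit with ⟨H, hH1, hH2⟩ | ⟨J, hJ1, hJ2⟩
          · -- hH2 : M = H ++ B.reverse ; case 3
            have hHpal : Pal H := by
              have h1 : H.reverse ++ B.reverse = H ++ B.reverse := by
                calc H.reverse ++ B.reverse = (B ++ H).reverse := by simp
                  _ = M.reverse.reverse := by rw [← hH1]
                  _ = M := by simp
                  _ = H ++ B.reverse := hH2
              exact List.append_cancel_right h1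
            refine Or.inr (Or.inr (Or.inl ⟨H, X₂, G, B.reverse, hHpal, hX2pal, hGpal, ?_, ?_⟩))
            · rw [hX2a, hH2]
            · rw [hG2]; simp
          · -- hJ1 : B = M.reverse ++ J ; case 4
            have hJpal : Pal J := by
              have h1 : J.reverse ++ M = J ++ M := by
                calc J.reverse ++ M = (M.reverse ++ J).reverse := by simp
                  _ = B.reverse := by rw [← hJ1]
                  _ = J ++ M := hJ2
              exact List.append_cancel_right h1
            refine Or.inr (Or.inr (Or.inr (Or.inl ⟨X₂, G, J, M, hX2pal, hGpal, hJpal, hX2a, ?_⟩)))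
            rw [hG2, hJ1]
            simp [List.append_assoc]
    · -- hC1 : B = R' ++ C, hC2 : X.reverse ++ B.reverse = C ++ (X ++ R')
      have hBrev : B.reverse = C.reverse ++ R' := by
        rw [hC1]; simp [hR'']
      have hVC : X.reverse ++ C.reverse = C ++ X := by
        have h1 : (X.reverse ++ C.reverse) ++ R' = (C ++ X) ++ R' := by
          calc (X.reverse ++ C.reverse) ++ R' = X.reverse ++ (C.reverse ++ R') := by
                simp [List.append_assoc]
            _ = X.reverse ++ B.reverse := by rw [← hBrev]
            _ = C ++ (X ++ R') := hC2
            _ = (C ++ X) ++ R' := by simp [List.append_assoc]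
        exact List.append_cancel_right h1
      rcases List.append_eq_append_iff.mp hVC.symm with ⟨K, hK1, hK2⟩ | ⟨C₂, hC21, hC22⟩
      · -- hK1 : X.reverse = C ++ K, hK2 : X = K ++ C.reverse
        have hKpal : Pal K := by
          have h1 : K.reverse ++ C.reverse = K ++ C.reverse := by
            calc K.reverse ++ C.reverse = (C ++ K).reverse := by simp
              _ = X.reverse.reverse := by rw [← hK1]
              _ = X := by simp
              _ = K ++ C.reverse := hK2
          exact List.append_cancel_right h1
        have hQ2 : Y.reverse ++ (R' ++ C) = C.reverse ++ (R' ++ Y) := by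
          have h1 : Y.reverse ++ (R' ++ C) = B.reverse ++ Y := by
            rw [← hC1]; exact hQeq
          rw [h1, hBrev]
          simp [List.append_assoc]
        rcases List.append_eq_append_iff.mp hQ2 with ⟨D, hD1, hD2⟩ | ⟨E, hE1, hE2⟩
        · -- hD1 : C.reverse = Y.reverse ++ D, hD2 : R' ++ C = D ++ (R' ++ Y)
          have hCeq : C = D.reverse ++ Y := by
            calc C = C.reverse.reverse := by simp
              _ = (Y.reverse ++ D).reverse := by rw [hD1]
              _ = D.reverse ++ Y := by simp
          have hDR : R' ++ D.reverse = D ++ R' := by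
            have h1 : (R' ++ D.reverse) ++ Y = (D ++ R') ++ Y := by
              calc (R' ++ D.reverse) ++ Y = R' ++ (D.reverse ++ Y) := by simp [List.append_assoc]
                _ = R' ++ C := by rw [← hCeq]
                _ = D ++ (R' ++ Y) := hD2
                _ = (D ++ R') ++ Y := by simp [List.append_assoc]
            exact List.append_cancel_right h1
          have hpal : Pal (D ++ R') := by
            show (D ++ R').reverse = D ++ R'
            rw [List.reverse_append, hR'']
            exact hDR
          obtain ⟨u, v, hu, hv, hDuv⟩ :=
            palL1 (D ++ R').length (D ++ R') D R' le_rfl hpal hR' rfl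
          have hu' : u.reverse = u := hu
          have hv' : v.reverse = v := hv
          refine Or.inl ⟨K, u, v, hKpal, hu, hv, ?_⟩
          rw [hK2, hD1, hDuv]
          simp [List.append_assoc, hu', hv']
        · -- hE1 : Y.reverse = C.reverse ++ E, hE2 : R' ++ Y = E ++ (R' ++ C)
          have hYeq : Y = E.reverse ++ C := by
            calc Y = Y.reverse.reverse := by simp
              _ = (C.reverse ++ E).reverse := by rw [hE1]
              _ = E.reverse ++ C := by simp
          have hER : R' ++ E.reverse = E ++ R' := by
            have h1 : (R' ++ E.reverse) ++ C = (E ++ R') ++ C := by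
              calc (R' ++ E.reverse) ++ C = R' ++ (E.reverse ++ C) := by simp [List.append_assoc]
                _ = R' ++ Y := by rw [← hYeq]
                _ = E ++ (R' ++ C) := hE2
                _ = (E ++ R') ++ C := by simp [List.append_assoc]
            exact List.append_cancel_right h1
          have hpal : Pal (E ++ R') := by
            show (E ++ R').reverse = E ++ R'
            rw [List.reverse_append, hR'']
            exact hER
          obtain ⟨u, v, hu, hv, hEuv⟩ :=
            palL1 (E ++ R').length (E ++ R') E R' le_rfl hpal hR' rfl
          have hu' : u.reverse = u := hu
          have hv' : v.reverse = v := hv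
          refine Or.inr (Or.inr (Or.inr (Or.inr (Or.inl
            ⟨K, v, u, C.reverse, hKpal, hv, hu, hK2, ?_⟩))))
          rw [hYeq, hEuv]
          simp [List.append_assoc, hu', hv']
      · -- hC21 : C = X.reverse ++ C₂, hC22 : C.reverse = C₂ ++ X
        have hC2pal : Pal C₂ := by
          have h1 : C₂.reverse ++ X = C₂ ++ X := by
            calc C₂.reverse ++ X = (X.reverse ++ C₂).reverse := by simp
              _ = C.reverse := by rw [← hC21]
              _ = C₂ ++ X := hC22
          exact List.append_cancel_right h1
        refine oracle (Y.reverse ++ B) C₂ R' hQlt hQpal hC2pal hR' ?_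
        calc Y.reverse ++ B = B.reverse ++ Y := hQeq
          _ = (C.reverse ++ R') ++ Y := by rw [hBrev]
          _ = ((C₂ ++ X) ++ R') ++ Y := by rw [hC22]

private lemma mainLem : ∀ n (P Q X R Y : List α), P.length ≤ n → Pal P → Pal Q → Pal R →
    P = Q ++ X ++ R ++ Y → SixCases X Y := by
  intro n
  induction n with
  | zero =>
    intro P Q X R Y hn hP hQ hR hPe
    have hP0 : P = [] := List.length_eq_zero_iff.mp (Nat.le_zero.mp hn)
    have h0 : Q ++ X ++ R ++ Y = [] := hPe.symm.trans hP0
    simp only [List.append_eq_nil_iff] at h0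
    obtain ⟨⟨⟨-, hX⟩, -⟩, hY⟩ := h0
    exact Or.inr (Or.inl ⟨[], [], [], [], pal_nil', pal_nil', pal_nil',
      by simp [hX], by simp [hY]⟩)
  | succ n ih =>
    intro P Q X R Y hn hP hQ hR hPe
    have hP' : P.reverse = P := hP
    have hQ' : Q.reverse = Q := hQ
    have hR' : R.reverse = R := hR
    have hE : Q ++ (X ++ (R ++ Y)) = Y.reverse ++ (R ++ (X.reverse ++ Q)) := by
      calc Q ++ (X ++ (R ++ Y)) = P := by rw [hPe]; simp [List.append_assoc]
        _ = P.reverse := hP'.symm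
        _ = Y.reverse ++ (R ++ (X.reverse ++ Q)) := by
            rw [hPe]
            simp only [List.reverse_append, List.append_assoc]
            rw [hQ', hR']
    rcases List.append_eq_append_iff.mp hE with ⟨A, hA1, hA2⟩ | ⟨B, hB1, hB2⟩
    · -- hA1 : Y.reverse = Q ++ A, hA2 : X ++ (R ++ Y) = A ++ (R ++ (X.reverse ++ Q))
      have hYe : Y = A.reverse ++ Q := by
        calc Y = Y.reverse.reverse := by simp
          _ = (Q ++ A).reverse := by rw [hA1]
          _ = A.reverse ++ Q := by simp [hQ']
      rw [hYe] at hA2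
      simp only [← List.append_assoc] at hA2
      have hW1 := List.append_cancel_right hA2
      -- hW1 : (X ++ R) ++ A.reverse = (A ++ R) ++ X.reverse
      simp only [List.append_assoc] at hW1
      -- hW1 : X ++ (R ++ A.reverse) = A ++ (R ++ X.reverse)
      rcases List.append_eq_append_iff.mp hW1 with ⟨D, hD1, hD2⟩ | ⟨E1, hE1, hE2⟩
      · -- hD1 : A = X ++ D, hD2 : R ++ A.reverse = D ++ (R ++ X.reverse)
        have hArev : A.reverse = D.reverse ++ X.reverse := by rw [hD1]; simp
        rw [hArev] at hD2
        simp only [← List.append_assoc] at hD2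
        have hDR := List.append_cancel_right hD2
        -- hDR : R ++ D.reverse = D ++ R
        have hpal : Pal (D ++ R) := by
          show (D ++ R).reverse = D ++ R
          rw [List.reverse_append, hR']
          exact hDR
        obtain ⟨u, v, hu, hv, hDuv⟩ := palL1 (D ++ R).length (D ++ R) D R le_rfl hpal hR rfl
        have hu' : u.reverse = u := hu
        have hv' : v.reverse = v := hv
        have hDrev : D.reverse = v ++ u := by rw [hDuv]; simp [hu', hv']
        refine Or.inr (Or.inr (Or.inr (Or.inr (Or.inr ⟨v, u, Q, hv, hu, hQ, ?_⟩))))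
        rw [hYe, hArev, hDrev]
      · -- hE1 : X = A ++ E1, hE2 : R ++ X.reverse = E1 ++ (R ++ A.reverse)
        have hXrev : X.reverse = E1.reverse ++ A.reverse := by rw [hE1]; simp
        rw [hXrev] at hE2
        simp only [← List.append_assoc] at hE2
        have hER := List.append_cancel_right hE2
        -- hER : R ++ E1.reverse = E1 ++ R
        have hpal : Pal (E1 ++ R) := by
          show (E1 ++ R).reverse = E1 ++ R
          rw [List.reverse_append, hR']
          exact hER
        obtain ⟨u, v, hu, hv, hEuv⟩ := palL1 (E1 ++ R).length (E1 ++ R) E1 R le_rfl hpal hR rfl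
        refine Or.inr (Or.inl ⟨u, v, Q, A, hu, hv, hQ, ?_, hYe⟩)
        rw [hE1, hEuv]
        simp [List.append_assoc]
    · -- hB1 : Q = Y.reverse ++ B, hB2 : R ++ (X.reverse ++ Q) = B ++ (X ++ (R ++ Y))
      have hQe2 : Q = B.reverse ++ Y := by
        calc Q = Q.reverse := hQ'.symm
          _ = (Y.reverse ++ B).reverse := by rw [hB1]
          _ = B.reverse ++ Y := by simp
      rw [hQe2] at hB2
      simp only [← List.append_assoc] at hB2
      have hW0 := List.append_cancel_right hB2
      -- hW0 : (R ++ X.reverse) ++ B.reverse = (B ++ X) ++ R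
      simp only [List.append_assoc] at hW0
      have hW : B ++ (X ++ R) = R ++ (X.reverse ++ B.reverse) := hW0.symm
      by_cases hxyz : X.length + R.length + Y.length = 0
      · have hX0 : X = [] := List.length_eq_zero_iff.mp (by omega)
        have hY0 : Y = [] := List.length_eq_zero_iff.mp (by omega)
        exact Or.inr (Or.inl ⟨[], [], [], [], pal_nil', pal_nil', pal_nil',
          by simp [hX0], by simp [hY0]⟩)
      · have hQBpal : Pal (Y.reverse ++ B) := hB1 ▸ hQ
        have hQBlt : (Y.reverse ++ B).length < P.length := by
          have h1 : (Y.reverse ++ B).length = Q.length := by rw [← hB1]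
          have h2 : P.length = Q.length + X.length + R.length + Y.length := by
            rw [hPe]; simp [List.length_append]; omega
          omega
        refine lemB P.length X Y ?_ R.length B R le_rfl hR hQBpal hQBlt hW
        intro P' Q' R'' hlt hp hq hr he
        exact ih P' Q' X R'' Y (by omega) hp hq hr he

end Stmt10Aux

theorem stmt10 {α : Type*} (P Q R X Y : List α) (hP : Pal P) (hQ : Pal Q) (hR : Pal R)
    (h : P = Q ++ X ++ R ++ Y) :
    (∃ S T U : List α, Pal S ∧ Pal T ∧ Pal U ∧ X = S ++ Y.reverse ++ T ++ U) ∨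
    (∃ S T U Z : List α, Pal S ∧ Pal T ∧ Pal U ∧ X = Z ++ S ++ T ∧ Y = Z.reverse ++ U) ∨
    (∃ S T U Z : List α, Pal S ∧ Pal T ∧ Pal U ∧ X = S ++ Z ++ T ∧ Y = U ++ Z.reverse) ∨
    (∃ S T U Z : List α, Pal S ∧ Pal T ∧ Pal U ∧ X = Z ++ S ∧ Y = T ++ Z.reverse ++ U) ∨
    (∃ S T U Z : List α, Pal S ∧ Pal T ∧ Pal U ∧ X = S ++ Z ∧ Y = T ++ U ++ Z.reverse) ∨
    (∃ S T U : List α, Pal S ∧ Pal T ∧ Pal U ∧ Y = S ++ T ++ X.reverse ++ U) :=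
  mainLem P.length P Q X R Y le_rfl hP hQ hR h
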